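/- Contiguous relation for well-poised terms (first form): Let $r \ge 1$ and $k \ge 1$ be integers, and let $q, z, a_1, \ldots, a_{r+1}$ be nonzero complex numbers such that all factors occurring in denominators below are nonzero. Define $F_k(a_1, a_2, \ldots, a_{r+1}; q, z) = \frac{(a_1;q)_k (a_2;q)_k \cdots (a_{r+1};q)_k}{(q;q)_k (a_1q/a_2;q)_k \cdots (a_1q/a_{r+1};q)_k} z^k$. Then $F_k(a_1, a_2, \ldots, a_{r-1}, a_r q, a_{r+1}; q, z) - F_k(a_1, a_2, \ldots, a_{r-1}, a_r, a_{r+1}q; q, z) = \alpha \, F_{k-1}(a_1q^2, a_2q, \ldots, a_{r+1}q; q, z)$, where $\alpha = \frac{(a_r - a_{r+1})(1 - a_1/(a_r a_{r+1}))(1-a_1)(1-a_1q)(1-a_2)\cdots(1-a_{r-1})\, z}{(1 - a_1/a_r)(1 - a_1/a_{r+1})(1 - a_1q/a_2)\cdots(1 - a_1q/a_{r+1})}$. -/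
import Mathlib


set_option autoImplicit false

/-- The q-shifted factorial `(a;q)_n = ∏_{j=0}^{n-1} (1 - a q^j)`. -/
noncomputable def qPoch (q a : ℂ) (n : ℕ) : ℂ := ∏ j ∈ Finset.range n, (1 - a * q ^ j)

set_option maxHeartbeats 1000000

lemma qPoch_succ (q x : ℂ) (m : ℕ) : qPoch q x (m+1) = qPoch q x m * (1 - x * q ^ m) :=
  Finset.prod_range_succ _ _

lemma qPoch_shift (q x : ℂ) (m : ℕ) : qPoch q x (m+1) = (1 - x) * qPoch q (x * q) m := by
  rw [qPoch, Finset.prod_range_succ', qPoch, mul_comm]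
  have h1 : (1 - x * q ^ 0) = 1 - x := by ring
  have h2 : ∏ j ∈ Finset.range m, (1 - x * q ^ (j+1)) =
      ∏ j ∈ Finset.range m, (1 - x * q * q ^ j) :=
    Finset.prod_congr rfl fun j _ => by ring
  rw [h1, h2]

/-- The `k`-th term of a well-poised basic hypergeometric series with parameters
`a 1, a 2, …, a (r+1)`:
`F_k(a_1,…,a_{r+1};q,z) = (a_1,…,a_{r+1};q)_k / ((q;q)_k (a_1 q/a_2,…,a_1 q/a_{r+1};q)_k) z^k`. -/
noncomputable def wpTerm (r : ℕ) (a : ℕ → ℂ) (q z : ℂ) (k : ℕ) : ℂ :=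
  (∏ i ∈ Finset.Icc 1 (r + 1), qPoch q (a i) k) /
    (qPoch q q k * ∏ i ∈ Finset.Icc 2 (r + 1), qPoch q (a 1 * q / a i) k) * z ^ k

/-- Contiguous relation for well-poised terms (first form), Eq. (1.1). -/
theorem contiguous_relation_first (r k : ℕ) (hr : 1 ≤ r) (hk : 1 ≤ k) (q z : ℂ) (a : ℕ → ℂ)
    (hq : q ≠ 0) (hz : z ≠ 0) (ha : ∀ i ∈ Finset.Icc 1 (r + 1), a i ≠ 0)
    (a' a'' b : ℕ → ℂ)
    (ha' : a' = Function.update a r (a r * q))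
    (ha'' : a'' = Function.update a (r + 1) (a (r + 1) * q))
    (hb : b = fun i => if i = 1 then a 1 * q ^ 2 else a i * q)
    (hd1 : qPoch q q k * ∏ i ∈ Finset.Icc 2 (r + 1), qPoch q (a' 1 * q / a' i) k ≠ 0)
    (hd2 : qPoch q q k * ∏ i ∈ Finset.Icc 2 (r + 1), qPoch q (a'' 1 * q / a'' i) k ≠ 0)
    (hd3 : qPoch q q (k - 1) *
      ∏ i ∈ Finset.Icc 2 (r + 1), qPoch q (b 1 * q / b i) (k - 1) ≠ 0)
    (hd4 : (1 - a 1 / a r) * (1 - a 1 / a (r + 1)) *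
      ∏ i ∈ Finset.Icc 2 (r + 1), (1 - a 1 * q / a i) ≠ 0) :
    wpTerm r a' q z k - wpTerm r a'' q z k
    = (a r - a (r + 1)) * (1 - a 1 / (a r * a (r + 1))) * (1 - a 1) * (1 - a 1 * q) *
        (∏ i ∈ Finset.Icc 2 (r - 1), (1 - a i)) * z /
        ((1 - a 1 / a r) * (1 - a 1 / a (r + 1)) *
          ∏ i ∈ Finset.Icc 2 (r + 1), (1 - a 1 * q / a i)) *
        wpTerm r b q z (k - 1) := by
  subst ha' ha'' hb
  rcases eq_or_lt_of_le hr with h1 | h2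
  · -- r = 1 : hypothesis hd4 is contradictory
    exfalso
    apply hd4
    have h0 : a 1 ≠ 0 := ha 1 (Finset.mem_Icc.mpr ⟨le_refl 1, by omega⟩)
    rw [← h1, div_self h0]
    simp
  -- now 2 ≤ r
  obtain ⟨m, rfl⟩ : ∃ m, k = m + 1 := ⟨k - 1, by omega⟩
  simp only [Nat.add_sub_cancel] at hd3 ⊢
  have har : a r ≠ 0 := ha r (Finset.mem_Icc.mpr ⟨hr, by omega⟩)
  have har1 : a (r+1) ≠ 0 := ha (r+1) (Finset.mem_Icc.mpr ⟨by omega, le_refl _⟩)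
  have ha1 : a 1 ≠ 0 := ha 1 (Finset.mem_Icc.mpr ⟨le_refl 1, by omega⟩)
  have hins : Finset.Icc 2 (r+1) = insert r (insert (r+1) (Finset.Icc 2 (r-1))) := by
    ext x; simp only [Finset.mem_Icc, Finset.mem_insert]; omega
  have hins1 : Finset.Icc 1 (r+1) = insert 1 (insert r (insert (r+1) (Finset.Icc 2 (r-1)))) := by
    ext x; simp only [Finset.mem_Icc, Finset.mem_insert]; omega
  have h1notin : (1:ℕ) ∉ insert r (insert (r+1) (Finset.Icc 2 (r-1))) := by
    simp only [Finset.mem_insert, Finset.mem_Icc]; omega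
  have hrnotin : r ∉ insert (r+1) (Finset.Icc 2 (r-1)) := by
    simp only [Finset.mem_insert, Finset.mem_Icc]; omega
  have hr1notin : r+1 ∉ Finset.Icc 2 (r-1) := by
    simp only [Finset.mem_Icc]; omega
  -- Numerator of wpTerm r a' :
  have hNum1 : (∏ i ∈ Finset.Icc 1 (r+1), qPoch q (Function.update a r (a r * q) i) (m+1))
      = qPoch q (a 1) (m+1) * (qPoch q (a r * q) m * (1 - a r * q * q ^ m)) *
        ((1 - a (r+1)) * qPoch q (a (r+1) * q) m) *
        ((∏ i ∈ Finset.Icc 2 (r-1), (1 - a i)) * ∏ i ∈ Finset.Icc 2 (r-1), qPoch q (a i * q) m) := by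
    rw [hins1, Finset.prod_insert h1notin, Finset.prod_insert hrnotin,
      Finset.prod_insert hr1notin]
    have hmid : ∏ i ∈ Finset.Icc 2 (r-1), qPoch q (Function.update a r (a r * q) i) (m+1)
        = (∏ i ∈ Finset.Icc 2 (r-1), (1 - a i)) * ∏ i ∈ Finset.Icc 2 (r-1), qPoch q (a i * q) m := by
      rw [← Finset.prod_mul_distrib]
      refine Finset.prod_congr rfl fun i hi => ?_
      rw [Finset.mem_Icc] at hi
      rw [Function.update_of_ne (show i ≠ r by omega), qPoch_shift]
    rw [hmid, Function.update_of_ne (show (1:ℕ) ≠ r by omega), Function.update_self,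
      Function.update_of_ne (show r+1 ≠ r by omega),
      qPoch_succ q (a r * q) m, qPoch_shift q (a (r+1)) m]
    ring
  -- Denominator of wpTerm r a' :
  have hDen1 : qPoch q q (m+1) * ∏ i ∈ Finset.Icc 2 (r+1),
        qPoch q (Function.update a r (a r * q) 1 * q / Function.update a r (a r * q) i) (m+1)
      = qPoch q q m * (1 - q * q ^ m) *
        ((1 - a 1 / a r) * qPoch q (a 1 * q / a r) m) *
        (qPoch q (a 1 * q / a (r+1)) m * (1 - a 1 * q / a (r+1) * q ^ m)) *
        ((∏ i ∈ Finset.Icc 2 (r-1), (1 - a 1 * q / a i)) *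
          ∏ i ∈ Finset.Icc 2 (r-1), qPoch q (a 1 * q ^ 2 / a i) m) := by
    rw [hins, Finset.prod_insert hrnotin, Finset.prod_insert hr1notin,
      Function.update_of_ne (show (1:ℕ) ≠ r by omega)]
    have hmid : ∏ i ∈ Finset.Icc 2 (r-1),
        qPoch q (a 1 * q / Function.update a r (a r * q) i) (m+1)
        = (∏ i ∈ Finset.Icc 2 (r-1), (1 - a 1 * q / a i)) *
          ∏ i ∈ Finset.Icc 2 (r-1), qPoch q (a 1 * q ^ 2 / a i) m := by
      rw [← Finset.prod_mul_distrib]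
      refine Finset.prod_congr rfl fun i hi => ?_
      rw [Finset.mem_Icc] at hi
      rw [Function.update_of_ne (show i ≠ r by omega), qPoch_shift,
        show a 1 * q / a i * q = a 1 * q ^ 2 / a i from by ring]
    rw [hmid, Function.update_self, Function.update_of_ne (show r+1 ≠ r by omega),
      mul_div_mul_right (a 1) (a r) hq,
      qPoch_shift q (a 1 / a r) m, show a 1 / a r * q = a 1 * q / a r from by ring,
      qPoch_succ q (a 1 * q / a (r+1)) m, qPoch_succ q q m]
    ring
  have hNum2 : (∏ i ∈ Finset.Icc 1 (r+1), qPoch q (Function.update a (r+1) (a (r+1) * q) i) (m+1))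
      = qPoch q (a 1) (m+1) * ((1 - a r) * qPoch q (a r * q) m) *
        (qPoch q (a (r+1) * q) m * (1 - a (r+1) * q * q ^ m)) *
        ((∏ i ∈ Finset.Icc 2 (r-1), (1 - a i)) * ∏ i ∈ Finset.Icc 2 (r-1), qPoch q (a i * q) m) := by
    rw [hins1, Finset.prod_insert h1notin, Finset.prod_insert hrnotin,
      Finset.prod_insert hr1notin]
    have hmid : ∏ i ∈ Finset.Icc 2 (r-1), qPoch q (Function.update a (r+1) (a (r+1) * q) i) (m+1)
        = (∏ i ∈ Finset.Icc 2 (r-1), (1 - a i)) * ∏ i ∈ Finset.Icc 2 (r-1), qPoch q (a i * q) m := by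
      rw [← Finset.prod_mul_distrib]
      refine Finset.prod_congr rfl fun i hi => ?_
      rw [Finset.mem_Icc] at hi
      rw [Function.update_of_ne (show i ≠ r+1 by omega), qPoch_shift]
    rw [hmid, Function.update_of_ne (show (1:ℕ) ≠ r+1 by omega), Function.update_self,
      Function.update_of_ne (show r ≠ r+1 by omega),
      qPoch_succ q (a (r+1) * q) m, qPoch_shift q (a r) m]
    ring
  have hDen2 : qPoch q q (m+1) * ∏ i ∈ Finset.Icc 2 (r+1),
        qPoch q (Function.update a (r+1) (a (r+1) * q) 1 * q /
          Function.update a (r+1) (a (r+1) * q) i) (m+1)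
      = qPoch q q m * (1 - q * q ^ m) *
        (qPoch q (a 1 * q / a r) m * (1 - a 1 * q / a r * q ^ m)) *
        ((1 - a 1 / a (r+1)) * qPoch q (a 1 * q / a (r+1)) m) *
        ((∏ i ∈ Finset.Icc 2 (r-1), (1 - a 1 * q / a i)) *
          ∏ i ∈ Finset.Icc 2 (r-1), qPoch q (a 1 * q ^ 2 / a i) m) := by
    rw [hins, Finset.prod_insert hrnotin, Finset.prod_insert hr1notin,
      Function.update_of_ne (show (1:ℕ) ≠ r+1 by omega)]
    have hmid : ∏ i ∈ Finset.Icc 2 (r-1),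
        qPoch q (a 1 * q / Function.update a (r+1) (a (r+1) * q) i) (m+1)
        = (∏ i ∈ Finset.Icc 2 (r-1), (1 - a 1 * q / a i)) *
          ∏ i ∈ Finset.Icc 2 (r-1), qPoch q (a 1 * q ^ 2 / a i) m := by
      rw [← Finset.prod_mul_distrib]
      refine Finset.prod_congr rfl fun i hi => ?_
      rw [Finset.mem_Icc] at hi
      rw [Function.update_of_ne (show i ≠ r+1 by omega), qPoch_shift,
        show a 1 * q / a i * q = a 1 * q ^ 2 / a i from by ring]
    rw [hmid, Function.update_self, Function.update_of_ne (show r ≠ r+1 by omega),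
      mul_div_mul_right (a 1) (a (r+1)) hq,
      qPoch_shift q (a 1 / a (r+1)) m,
      show a 1 / a (r+1) * q = a 1 * q / a (r+1) from by ring,
      qPoch_succ q (a 1 * q / a r) m, qPoch_succ q q m]
    ring
  have hNum3 : (∏ i ∈ Finset.Icc 1 (r+1), qPoch q (if i = 1 then a 1 * q ^ 2 else a i * q) m)
      = qPoch q (a 1 * q ^ 2) m * (qPoch q (a r * q) m * qPoch q (a (r+1) * q) m *
          ∏ i ∈ Finset.Icc 2 (r-1), qPoch q (a i * q) m) := by
    rw [hins1, Finset.prod_insert h1notin, Finset.prod_insert hrnotin,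
      Finset.prod_insert hr1notin, if_pos rfl, if_neg (show ¬ r = 1 by omega),
      if_neg (show ¬ r + 1 = 1 by omega)]
    have hmid : ∏ i ∈ Finset.Icc 2 (r-1), qPoch q (if i = 1 then a 1 * q ^ 2 else a i * q) m
        = ∏ i ∈ Finset.Icc 2 (r-1), qPoch q (a i * q) m := by
      refine Finset.prod_congr rfl fun i hi => ?_
      rw [Finset.mem_Icc] at hi
      rw [if_neg (show ¬ i = 1 by omega)]
    rw [hmid]
    ring
  have hDen3 : qPoch q q m * ∏ i ∈ Finset.Icc 2 (r+1),
        qPoch q (a 1 * q ^ 2 * q / (if i = 1 then a 1 * q ^ 2 else a i * q)) m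
      = qPoch q q m * (qPoch q (a 1 * q ^ 2 / a r) m * (qPoch q (a 1 * q ^ 2 / a (r+1)) m *
          ∏ i ∈ Finset.Icc 2 (r-1), qPoch q (a 1 * q ^ 2 / a i) m)) := by
    rw [hins, Finset.prod_insert hrnotin, Finset.prod_insert hr1notin,
      if_neg (show ¬ r = 1 by omega), if_neg (show ¬ r + 1 = 1 by omega),
      mul_div_mul_right (a 1 * q ^ 2) (a r) hq, mul_div_mul_right (a 1 * q ^ 2) (a (r+1)) hq]
    have hmid : ∏ i ∈ Finset.Icc 2 (r-1),
        qPoch q (a 1 * q ^ 2 * q / (if i = 1 then a 1 * q ^ 2 else a i * q)) m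
        = ∏ i ∈ Finset.Icc 2 (r-1), qPoch q (a 1 * q ^ 2 / a i) m := by
      refine Finset.prod_congr rfl fun i hi => ?_
      rw [Finset.mem_Icc] at hi
      rw [if_neg (show ¬ i = 1 by omega), mul_div_mul_right (a 1 * q ^ 2) (a i) hq]
    rw [hmid]
  -- basic relations between qPoch values
  have hrel : qPoch q (a 1) (m+1) * (1 - a 1 * q ^ (m+1))
      = (1 - a 1) * ((1 - a 1 * q) * qPoch q (a 1 * q ^ 2) m) := by
    rw [← qPoch_succ, qPoch_shift, qPoch_shift, show a 1 * q * q = a 1 * q ^ 2 from by ring]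
  have hrelr : (1 - a 1 * q / a r) * qPoch q (a 1 * q ^ 2 / a r) m
      = qPoch q (a 1 * q / a r) m * (1 - a 1 * q / a r * q ^ m) := by
    rw [show a 1 * q ^ 2 / a r = a 1 * q / a r * q from by ring, ← qPoch_shift, qPoch_succ]
  have hrelr1 : (1 - a 1 * q / a (r+1)) * qPoch q (a 1 * q ^ 2 / a (r+1)) m
      = qPoch q (a 1 * q / a (r+1)) m * (1 - a 1 * q / a (r+1) * q ^ m) := by
    rw [show a 1 * q ^ 2 / a (r+1) = a 1 * q / a (r+1) * q from by ring, ← qPoch_shift,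
      qPoch_succ]
  have hscal : (1 - a r * q * q ^ m) * (1 - a 1 * q / a r * q ^ m) * (1 - a (r+1)) *
        (1 - a 1 / a (r+1))
      - (1 - a (r+1) * q * q ^ m) * (1 - a 1 * q / a (r+1) * q ^ m) * (1 - a r) *
        (1 - a 1 / a r)
      = (a r - a (r+1)) * (1 - a 1 / (a r * a (r+1))) * (1 - a 1 * q ^ (m+1)) *
        (1 - q * q ^ m) := by
    field_simp
    ring
  -- nonvanishing facts in structured form
  rw [hDen1] at hd1
  rw [hDen2] at hd2
  simp only [reduceIte] at hd3
  rw [hDen3] at hd3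
  rw [hins, Finset.prod_insert hrnotin, Finset.prod_insert hr1notin] at hd4
  -- unfold the goal
  simp only [wpTerm, reduceIte]
  rw [hNum1, hDen1, hNum2, hDen2, hNum3, hDen3,
    hins, Finset.prod_insert hrnotin, Finset.prod_insert hr1notin]
  -- abbreviate the atoms
  set c1 := qPoch q (a 1) (m+1) with hc1def
  set nr := qPoch q (a r * q) m with hnrdef
  set nr1 := qPoch q (a (r+1) * q) m with hnr1def
  set f' := qPoch q q m with hfdef
  set gr := qPoch q (a 1 * q / a r) m with hgrdef
  set gr1 := qPoch q (a 1 * q / a (r+1)) m with hgr1def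
  set p1 := qPoch q (a 1 * q ^ 2) m with hp1def
  set pr := qPoch q (a 1 * q ^ 2 / a r) m with hprdef
  set pr1 := qPoch q (a 1 * q ^ 2 / a (r+1)) m with hpr1def
  set Wm := ∏ i ∈ Finset.Icc 2 (r-1), (1 - a i) with hWdef
  set N2 := ∏ i ∈ Finset.Icc 2 (r-1), qPoch q (a i * q) m with hN2def
  set Em := ∏ i ∈ Finset.Icc 2 (r-1), (1 - a 1 * q / a i) with hEmdef
  set Eh := ∏ i ∈ Finset.Icc 2 (r-1), qPoch q (a 1 * q ^ 2 / a i) m with hEhdef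
  trans ((a r - a (r+1)) * (1 - a 1 / (a r * a (r+1))) * (1 - a 1) * (1 - a 1 * q) * Wm * z) *
      (p1 * (nr * nr1 * N2) * z ^ m) /
      (((1 - a 1 / a r) * (1 - a 1 / a (r+1)) *
        ((1 - a 1 * q / a r) * ((1 - a 1 * q / a (r+1)) * Em))) * (f' * (pr * (pr1 * Eh))))
  · rw [← sub_mul, div_sub_div _ _ hd1 hd2, div_mul_eq_mul_div,
      div_eq_div_iff (mul_ne_zero hd1 hd2) (mul_ne_zero hd4 hd3)]
    linear_combination
      (c1 * Wm * N2 * nr * nr1 * f' * (1 - q * q ^ m) * Em * Eh * gr * gr1 * z ^ (m+1) *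
        ((1 - a 1 / a r) * (1 - a 1 / a (r+1)) *
          ((1 - a 1 * q / a r) * ((1 - a 1 * q / a (r+1)) * Em))) *
        (f' * (pr * (pr1 * Eh)))) * hscal
      + (c1 * (1 - a 1 * q ^ (m+1)) * Wm * N2 * nr * nr1 * f' ^ 2 * (1 - q * q ^ m) ^ 2 *
          Em ^ 2 * Eh ^ 2 * gr * gr1 *
          ((a r - a (r+1)) * (1 - a 1 / (a r * a (r+1)))) * z ^ (m+1) *
          (1 - a 1 / a r) * (1 - a 1 / a (r+1)) * gr1 * (1 - a 1 * q / a (r+1) * q ^ m)) * hrelr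
      + (c1 * (1 - a 1 * q ^ (m+1)) * Wm * N2 * nr * nr1 * f' ^ 2 * (1 - q * q ^ m) ^ 2 *
          Em ^ 2 * Eh ^ 2 * gr * gr1 *
          ((a r - a (r+1)) * (1 - a 1 / (a r * a (r+1)))) * z ^ (m+1) *
          (1 - a 1 / a r) * (1 - a 1 / a (r+1)) * (1 - a 1 * q / a r) * pr) * hrelr1
      + (((a r - a (r+1)) * (1 - a 1 / (a r * a (r+1)))) * Wm * z ^ (m+1) * nr * nr1 * N2 *
          f' ^ 2 * (1 - q * q ^ m) ^ 2 * (1 - a 1 / a r) * (1 - a 1 / a (r+1)) *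
          gr ^ 2 * gr1 ^ 2 * (1 - a 1 * q / a r * q ^ m) * (1 - a 1 * q / a (r+1) * q ^ m) *
          Em ^ 2 * Eh ^ 2) * hrel
  · rw [div_mul_eq_mul_div, div_mul_eq_mul_div, mul_div_assoc', div_div, mul_comm (f' * (pr * (pr1 * Eh)))]
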